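/- arXiv:2509.04414 — 2 statements merged into one kernel-verified Lean document; each statement's English description precedes it below -/
import Mathlib

section
/- Let T : ℝⁿ → ℝᵐ be a linear map with operator norm ‖T‖ at most 1, and suppose that for the n-form ω pulled back by T one has ⋆T^*ω = ‖T‖ⁿ = 1 pointwise, where ω is a constant-coefficient n-form of comass one on ℝᵐ. Then T preserves norms, i.e. T is a linear isometric embedding ℝⁿ → ℝᵐ. -/
/-!
Put `v i = T eᵢ`. Gram–Schmidt inside the span of `v` produces an orthonormal `u` with
`ω v = ω u * ∏ ⟪u i, v i⟫`, the change of basis being triangular. Flipping one vector of `u`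
shows `|ω u| ≤ 1`, and `|⟪u i, v i⟫| ≤ ‖v i‖ ≤ ‖T‖ ≤ 1`; so `ω v = 1` forces every
`|⟪u i, v i⟫| = 1`, whence `v i = ±u i` by the equality case of Cauchy–Schwarz. Thus `T` maps an
orthonormal basis to an orthonormal family.
-/

open RealInnerProductSpace InnerProductSpace

section

variable {E : Type*} [NormedAddCommGroup E] [InnerProductSpace ℝ E] {ι : Type*}

theorem Orthonormal.smul_of_abs_eq_one {u : ι → E} (hu : Orthonormal ℝ u) {a : ι → ℝ}
    (ha : ∀ i, |a i| = 1) : Orthonormal ℝ fun i => a i • u i := by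
  refine ⟨fun i => by rw [norm_smul, Real.norm_eq_abs, ha i, hu.1 i, one_mul], fun i j hij => ?_⟩
  simp only [real_inner_smul_left, real_inner_smul_right, hu.2 hij, mul_zero]

theorem abs_eq_one_of_mul_prod_eq_one [Fintype ι] {c : ℝ} {x : ι → ℝ} (hc : |c| ≤ 1)
    (hx : ∀ i, |x i| ≤ 1) (h : c * ∏ i, x i = 1) (i : ι) : |x i| = 1 := by
  classical
  have hrest : ∏ j ∈ Finset.univ.erase i, |x j| ≤ 1 :=
    Finset.prod_le_one (fun j _ => abs_nonneg _) fun j _ => hx j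
  refine le_antisymm (hx i) ?_
  calc 1 = |c| * (|x i| * ∏ j ∈ Finset.univ.erase i, |x j|) := by
        rw [Finset.mul_prod_erase _ (fun j => |x j|) (Finset.mem_univ i), ← Finset.abs_prod,
          ← abs_mul, h, abs_one]
    _ ≤ 1 * (|x i| * 1) := by gcongr
    _ = |x i| := by ring

theorem eq_inner_smul_of_abs_inner_eq_one {u v : E} (hu : ‖u‖ = 1) (hv : ‖v‖ ≤ 1)
    (h : |⟪u, v⟫| = 1) : v = ⟪u, v⟫ • u := by
  have hsq : ⟪u, v⟫ * ⟪u, v⟫ = 1 := by rw [← abs_mul_abs_self, h, one_mul]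
  have hdist : ‖v - ⟪u, v⟫ • u‖ ^ 2 = ‖v‖ ^ 2 - 1 := by
    rw [norm_sub_sq_real, real_inner_smul_right, norm_smul, Real.norm_eq_abs, h, hu,
      real_inner_comm u v]
    linarith
  have : ‖v - ⟪u, v⟫ • u‖ = 0 := by nlinarith [norm_nonneg v, norm_nonneg (v - ⟪u, v⟫ • u)]
  exact sub_eq_zero.mp (norm_eq_zero.mp this)

namespace AlternatingMap

theorem abs_apply_le_of_orthonormal [Fintype ι] [Nonempty ι] (ω : E [⋀^ι]→ₗ[ℝ] ℝ) {c : ℝ}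
    (hω : ∀ u, Orthonormal ℝ u → ω u ≤ c) {u : ι → E} (hu : Orthonormal ℝ u) : |ω u| ≤ c := by
  classical
  obtain ⟨i⟩ := ‹Nonempty ι›
  set a : ι → ℝ := Function.update 1 i (-1)
  have ha : ∀ j, |a j| = 1 := fun j => by
    rcases eq_or_ne j i with rfl | hj <;> simp [a, Function.update_of_ne, *]
  have hflip : ω (fun j => a j • u j) = -ω u := by
    rw [ω.map_smul_univ, Finset.prod_update_of_mem (Finset.mem_univ i)]
    simp
  have := hω _ (hu.smul_of_abs_eq_one ha)
  exact abs_le.mpr ⟨by linarith, hω u hu⟩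

theorem exists_orthonormal_apply_eq_mul_prod_inner [Fintype ι] [LinearOrder ι]
    [LocallyFiniteOrderBot ι] [WellFoundedLT ι] (ω : E [⋀^ι]→ₗ[ℝ] ℝ) {v : ι → E}
    (hv : LinearIndependent ℝ v) :
    ∃ u : ι → E, Orthonormal ℝ u ∧ ω v = ω u * ∏ i, ⟪u i, v i⟫ := by
  classical
  set K := Submodule.span ℝ (Set.range v)
  let v' : ι → K := fun i => ⟨v i, Submodule.subset_span ⟨i, rfl⟩⟩
  have : FiniteDimensional ℝ K := .span_of_finite ℝ (Set.finite_range v)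
  let b := gramSchmidtOrthonormalBasis (finrank_span_eq_card hv) v'
  let ωK := ω.compLinearMap K.subtype
  refine ⟨fun i => b i, b.orthonormal.comp_linearIsometry K.subtypeₗᵢ, ?_⟩
  have h := congrArg (· v') (ωK.eq_smul_basis_det b.toBasis)
  simp only [AlternatingMap.smul_apply, smul_eq_mul, b, gramSchmidtOrthonormalBasis_det] at h
  exact h

theorem orthonormal_of_apply_eq_one [Fintype ι] [LinearOrder ι] [LocallyFiniteOrderBot ι]
    [WellFoundedLT ι] (ω : E [⋀^ι]→ₗ[ℝ] ℝ) (hω : ∀ u, Orthonormal ℝ u → ω u ≤ 1) {v : ι → E}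
    (hv_norm : ∀ i, ‖v i‖ ≤ 1) (hv : ω v = 1) : Orthonormal ℝ v := by
  cases isEmpty_or_nonempty ι
  · exact ⟨isEmptyElim, isEmptyElim⟩
  have hli : LinearIndependent ℝ v := by
    by_contra h
    simp [ω.map_linearDependent v h] at hv
  obtain ⟨u, hu, hωv⟩ := ω.exists_orthonormal_apply_eq_mul_prod_inner hli
  have hinner : ∀ i, |⟪u i, v i⟫| ≤ 1 := fun i =>
    (abs_real_inner_le_norm _ _).trans (by rw [hu.1 i, one_mul]; exact hv_norm i)
  have habs : ∀ i, |⟪u i, v i⟫| = 1 :=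
    abs_eq_one_of_mul_prod_eq_one (ω.abs_apply_le_of_orthonormal hω hu) hinner (hωv ▸ hv)
  convert hu.smul_of_abs_eq_one habs using 1
  funext i
  exact eq_inner_smul_of_abs_inner_eq_one (hu.1 i) (hv_norm i) (habs i)

end AlternatingMap

end

theorem calibrated_linear_map_is_isometry_general (n m : ℕ)
    (T : EuclideanSpace ℝ (Fin n) →L[ℝ] EuclideanSpace ℝ (Fin m))
    (ω : AlternatingMap ℝ (EuclideanSpace ℝ (Fin m)) ℝ (Fin n))
    (hcomass_le : ∀ v : Fin n → EuclideanSpace ℝ (Fin m), Orthonormal ℝ v → ω v ≤ 1)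
    (hTnorm : ‖T‖ ≤ 1)
    (hpull : ω (fun i => T (EuclideanSpace.basisFun (Fin n) ℝ i)) = ‖T‖ ^ n)
    (hone : ‖T‖ ^ n = 1) :
    ∀ x, ‖T x‖ = ‖x‖ := by
  set e := EuclideanSpace.basisFun (Fin n) ℝ
  have hTe_norm : ∀ i, ‖T (e i)‖ ≤ 1 := fun i =>
    calc ‖T (e i)‖ ≤ ‖T‖ * ‖e i‖ := T.le_opNorm _
      _ ≤ 1 := by simpa [e.orthonormal.1 i] using hTnorm
  have hTe : Orthonormal ℝ (T ∘ e) :=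
    ω.orthonormal_of_apply_eq_one hcomass_le hTe_norm (hpull.trans hone)
  exact (T.toLinearMap.isometryOfOrthonormal (v := e.toBasis) (by simp)
    (by simpa using hTe)).norm_map

/-- If `T : ℝⁿ → ℝᵐ` is linear with `‖T‖ ≤ 1` and `ω` is a constant-coefficient `n`-form of
comass one on `ℝᵐ` with `⋆T^*ω = ‖T‖ⁿ = 1` (i.e. `ω(Te₁ ∧ … ∧ Te_n) = ‖T‖ⁿ = 1`), then `T`
is a linear isometric embedding. -/
theorem calibrated_linear_map_is_isometry (n m : ℕ)
    (T : EuclideanSpace ℝ (Fin n) →L[ℝ] EuclideanSpace ℝ (Fin m))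
    (ω : AlternatingMap ℝ (EuclideanSpace ℝ (Fin m)) ℝ (Fin n))
    (hcomass_le : ∀ v : Fin n → EuclideanSpace ℝ (Fin m), Orthonormal ℝ v → ω v ≤ 1)
    (hcomass_eq : ∃ v : Fin n → EuclideanSpace ℝ (Fin m), Orthonormal ℝ v ∧ ω v = 1)
    (hTnorm : ‖T‖ ≤ 1)
    (hpull : ω (fun i => T (EuclideanSpace.basisFun (Fin n) ℝ i)) = ‖T‖ ^ n)
    (hone : ‖T‖ ^ n = 1) :
    ∀ x, ‖T x‖ = ‖x‖ :=
  calibrated_linear_map_is_isometry_general n m T ω hcomass_le hTnorm hpull hone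
end

section
/- Let F : ℝⁿ → ℝᵐ with n ≥ 2. If F is continuously differentiable and there exists x₀ and C ≥ 0 such that for all r > 0, ( ⨍_{B_r(x₀)} ‖DF‖ⁿ dx )^{1/n} ≤ C · diam(F(B_{2r}(x₀)))/(2r), and moreover F is non-constant, then diam(F(B_r(x₀))) ≥ c·r for all sufficiently large r and some c > 0; i.e. the image diameter grows at least linearly. -/
open MeasureTheory

/-! The derivative of a non-constant `C¹` map is non-zero somewhere, so by continuity the ball
averages of `‖DF‖ⁿ` are positive from some radius `r₀` on, and by monotonicity they stay above
`ε := ⨍_{B_{r₀}(x₀)} ‖DF‖ⁿ` for `r ≥ r₀`. The Caccioppoli-type inequality then reads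
`ε^{1/n} ≤ C · diam(F(B_{2r}(x₀)))/(2r)`, i.e. `diam(F(B_r(x₀))) ≥ (ε^{1/n}/C) · r` for `r ≥ 2r₀`
(the inequality at `r₀` already forces `C > 0`, its left side being positive). -/

theorem exists_fderiv_ne_zero_of_ne {𝕜 E G : Type*} [RCLike 𝕜] [NormedAddCommGroup E]
    [NormedSpace 𝕜 E] [NormedAddCommGroup G] [NormedSpace 𝕜 G] {f : E → G}
    (hf : Differentiable 𝕜 f) {a b : E} (hab : f a ≠ f b) : ∃ x, fderiv 𝕜 f x ≠ 0 := by
  by_contra! h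
  exact hab (is_const_of_fderiv_eq_zero hf h a b)

theorem setAverage_pos_of_continuous {X : Type*} [TopologicalSpace X] [MeasurableSpace X]
    [OpensMeasurableSpace X] {μ : Measure X} [μ.IsOpenPosMeasure] {g : X → ℝ} {U : Set X}
    {x : X} (hg : Continuous g) (hg_nonneg : 0 ≤ g) (hU : IsOpen U) (hμU : μ U ≠ ⊤)
    (hgU : IntegrableOn g U μ) (hxU : x ∈ U) (hgx : g x ≠ 0) : 0 < ⨍ y in U, g y ∂μ := by
  have hμU_pos : 0 < μ.real U := ENNReal.toReal_pos (hU.measure_ne_zero μ ⟨x, hxU⟩) hμU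
  have hintegral_pos : 0 < ∫ y in U, g y ∂μ := by
    refine (setIntegral_pos_iff_support_of_nonneg_ae (.of_forall hg_nonneg) hgU).2 ?_
    exact (hg.isOpen_support.inter hU).measure_pos μ ⟨x, hgx, hxU⟩
  rw [setAverage_eq, smul_eq_mul]
  positivity

theorem exists_linear_lower_bound_of_le_mul_div {δ : ℝ → ℝ} {a C r₀ : ℝ} (ha : 0 < a)
    (hr₀ : 0 < r₀) (hδ : ∀ r, 0 ≤ δ r) (h : ∀ r ≥ r₀, a ≤ C * δ (2 * r) / (2 * r)) :
    ∃ c > (0 : ℝ), ∃ r₁ : ℝ, ∀ r ≥ r₁, c * r ≤ δ r := by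
  have hC : 0 < C := by
    have h₀ := h r₀ le_rfl
    by_contra! hC
    have : C * δ (2 * r₀) / (2 * r₀) ≤ 0 :=
      div_nonpos_of_nonpos_of_nonneg (mul_nonpos_of_nonpos_of_nonneg hC (hδ _)) (by positivity)
    linarith
  refine ⟨a / C, div_pos ha hC, 2 * r₀, fun r hr => ?_⟩
  have hr_pos : 0 < r := by linarith
  have hr_half := h (r / 2) (by linarith)
  rw [mul_div_cancel₀ r two_ne_zero, le_div_iff₀ hr_pos] at hr_half
  rw [div_mul_eq_mul_div, div_le_iff₀ hC]
  linarith

theorem caccioppoli_linear_diameter_growth_general (n m : ℕ)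
    (F : EuclideanSpace ℝ (Fin n) → EuclideanSpace ℝ (Fin m))
    (hF : ContDiff ℝ 1 F) (x₀ : EuclideanSpace ℝ (Fin n)) (C : ℝ)
    (hcacc : ∀ r : ℝ, 0 < r →
      (⨍ x in Metric.ball x₀ r, ‖fderiv ℝ F x‖ ^ n) ^ ((1 : ℝ) / n) ≤
        C * Metric.diam (F '' Metric.ball x₀ (2 * r)) / (2 * r))
    (hmono : MonotoneOn (fun r : ℝ => ⨍ x in Metric.ball x₀ r, ‖fderiv ℝ F x‖ ^ n)
      (Set.Ioi (0 : ℝ)))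
    (hnonconst : ∃ x y, F x ≠ F y) :
    ∃ c > (0 : ℝ), ∃ r₁ : ℝ, ∀ r ≥ r₁, c * r ≤ Metric.diam (F '' Metric.ball x₀ r) := by
  obtain ⟨a, b, hab⟩ := hnonconst
  obtain ⟨x₁, hx₁⟩ := exists_fderiv_ne_zero_of_ne (hF.differentiable one_ne_zero) hab
  have hg : Continuous fun x => ‖fderiv ℝ F x‖ ^ n :=
    (hF.continuous_fderiv one_ne_zero).norm.pow n
  set r₀ := dist x₁ x₀ + 1
  have hr₀ : 0 < r₀ := by positivity
  have hε : 0 < ⨍ x in Metric.ball x₀ r₀, ‖fderiv ℝ F x‖ ^ n :=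
    setAverage_pos_of_continuous hg (fun _ => by positivity) Metric.isOpen_ball
      measure_ball_lt_top.ne
      ((hg.locallyIntegrable.integrableOn_isCompact (isCompact_closedBall x₀ r₀)).mono_set
        Metric.ball_subset_closedBall)
      (Metric.mem_ball.2 (lt_add_one _)) (pow_ne_zero n (norm_ne_zero_iff.2 hx₁))
  have hbound : ∀ r ≥ r₀, (⨍ x in Metric.ball x₀ r₀, ‖fderiv ℝ F x‖ ^ n) ^ ((1 : ℝ) / n) ≤
      C * Metric.diam (F '' Metric.ball x₀ (2 * r)) / (2 * r) := fun r hr =>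
    (Real.rpow_le_rpow hε.le (hmono hr₀ (hr₀.trans_le hr) hr) (by positivity)).trans
      (hcacc r (hr₀.trans_le hr))
  exact exists_linear_lower_bound_of_le_mul_div (Real.rpow_pos_of_pos hε _) hr₀
    (fun _ => Metric.diam_nonneg) hbound

/-- If a non-constant `C¹` map `F : ℝⁿ → ℝᵐ` satisfies the Caccioppoli-type inequality
`(⨍_{B_r(x₀)} ‖DF‖ⁿ)^{1/n} ≤ C · diam(F(B_{2r}(x₀)))/(2r)` for all `r > 0`, and the ball
averages of `‖DF‖ⁿ` are non-decreasing in the radius, then the image diameter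
`diam(F(B_r(x₀)))` grows at least linearly for large `r`. -/
theorem caccioppoli_linear_diameter_growth (n m : ℕ) (hn : 2 ≤ n)
    (F : EuclideanSpace ℝ (Fin n) → EuclideanSpace ℝ (Fin m))
    (hF : ContDiff ℝ 1 F) (x₀ : EuclideanSpace ℝ (Fin n)) (C : ℝ) (hC : 0 ≤ C)
    (hcacc : ∀ r : ℝ, 0 < r →
      (⨍ x in Metric.ball x₀ r, ‖fderiv ℝ F x‖ ^ n) ^ ((1 : ℝ) / n) ≤
        C * Metric.diam (F '' Metric.ball x₀ (2 * r)) / (2 * r))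
    (hmono : MonotoneOn (fun r : ℝ => ⨍ x in Metric.ball x₀ r, ‖fderiv ℝ F x‖ ^ n)
      (Set.Ioi (0 : ℝ)))
    (hnonconst : ∃ x y, F x ≠ F y) :
    ∃ c > (0 : ℝ), ∃ r₁ : ℝ, ∀ r ≥ r₁, c * r ≤ Metric.diam (F '' Metric.ball x₀ r) :=
  caccioppoli_linear_diameter_growth_general n m F hF x₀ C hcacc hmono hnonconst
end
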